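/- In a normed space, 0 ∈ Cl²(F, x̄)(v, v) whenever v ∈ Ha(F, x̄) and x̄ ∈ F. -/

import Mathlib

open Filter Topology

variable {X : Type*} [NormedAddCommGroup X] [NormedSpace ℝ X]

/-- The Hadamard (hypertangent) cone. -/
def Ha (F : Set X) (xbar : X) : Set X :=
  {h | ∃ U ∈ nhds xbar, ∃ W ∈ nhds h, ∃ lam > (0:ℝ),
    ∀ x' ∈ F ∩ U, ∀ lam' : ℝ, 0 < lam' → lam' ≤ lam → ∀ w ∈ W, x' + lam' • w ∈ F}

/-- The second-order Clarke tangent set. -/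
def Cl2 (F : Set X) (xbar v1 v2 : X) : Set X :=
  {v | ∀ V ∈ nhds (0:X), ∀ V1 ∈ nhds (0:X), ∀ V2 ∈ nhds (0:X),
    ∃ U ∈ nhds xbar, ∃ lam1 > (0:ℝ), ∃ lam2 > (0:ℝ),
      ∀ x' ∈ F ∩ U, ∀ lam' lam'' : ℝ, 0 < lam' → lam' ≤ lam1 → 0 < lam'' → lam'' ≤ lam2 →
        ∃ v' v'' u : X, v' - v1 ∈ V1 ∧ x' + lam' • v' ∈ F ∧
          v'' - v2 ∈ V2 ∧ x' + lam'' • v'' ∈ F ∧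
          u - v ∈ V ∧ x' + lam' • v' + lam'' • v'' + (4 * lam' * lam'') • u ∈ F}

/-! Translating twice along `v` stays in `F` near `x̄`, because the first translate `x' + λ' v`
is still close to `x̄`; the witnesses `v' = v'' = v`, `u' = 0` then show `0 ∈ Cl²(F, x̄)(v, v)`. -/

theorem exists_nhds_add_smul_mem {E : Type*} [AddCommGroup E] [TopologicalSpace E] [Module ℝ E]
    [ContinuousAdd E] [ContinuousSMul ℝ E] {x : E} {U : Set E} (hU : U ∈ 𝓝 x) (v : E) :
    ∃ U' ∈ 𝓝 x, ∃ δ > (0:ℝ), ∀ y ∈ U', ∀ μ : ℝ, 0 ≤ μ → μ ≤ δ → y + μ • v ∈ U := by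
  have hcont : Tendsto (fun p : E × ℝ => p.1 + p.2 • v) (𝓝 x ×ˢ 𝓝 0) (𝓝 x) := by
    rw [← nhds_prod_eq]
    exact (by fun_prop : Continuous fun p : E × ℝ => p.1 + p.2 • v).tendsto' _ _ (by simp)
  obtain ⟨U', hU', I, hI, hprod⟩ := mem_prod_iff.mp (hcont hU)
  obtain ⟨δ, hδ, hball⟩ := Metric.nhds_basis_closedBall.mem_iff.mp hI
  refine ⟨U', hU', δ, hδ, fun y hy μ hμ hμδ => hprod (Set.mk_mem_prod hy (hball ?_))⟩
  rwa [Metric.mem_closedBall, Real.dist_0_eq_abs, abs_of_nonneg hμ]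

theorem exists_add_smul_add_smul_mem_of_mem_Ha {F : Set X} {xbar v : X} (hv : v ∈ Ha F xbar) :
    ∃ U ∈ 𝓝 xbar, ∃ lam > (0:ℝ), ∀ x' ∈ F ∩ U, ∀ μ ν : ℝ, 0 < μ → μ ≤ lam → 0 < ν → ν ≤ lam →
      x' + μ • v ∈ F ∧ x' + ν • v ∈ F ∧ x' + μ • v + ν • v ∈ F := by
  obtain ⟨U, hU, W, hW, lam, hlam, hHa⟩ := hv
  have htranslate : ∀ x' ∈ F ∩ U, ∀ μ : ℝ, 0 < μ → μ ≤ lam → x' + μ • v ∈ F :=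
    fun x' hx' μ hμ hμlam => hHa x' hx' μ hμ hμlam v (mem_of_mem_nhds hW)
  obtain ⟨U', hU', δ, hδ, hshift⟩ := exists_nhds_add_smul_mem hU v
  have hU'U : U' ⊆ U := fun y hy => by simpa using hshift y hy 0 le_rfl hδ.le
  refine ⟨U', hU', min lam δ, lt_min hlam hδ, fun x' hx' μ ν hμ hμle hν hνle => ?_⟩
  have hx'U : x' ∈ F ∩ U := ⟨hx'.1, hU'U hx'.2⟩
  have hμv : x' + μ • v ∈ F ∩ U :=
    ⟨htranslate x' hx'U μ hμ (hμle.trans (min_le_left _ _)),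
      hshift x' hx'.2 μ hμ.le (hμle.trans (min_le_right _ _))⟩
  exact ⟨hμv.1, htranslate x' hx'U ν hν (hνle.trans (min_le_left _ _)),
    htranslate _ hμv ν hν (hνle.trans (min_le_left _ _))⟩

theorem zero_mem_cl2_general (F : Set X) (xbar : X) (v : X)
    (hv : v ∈ Ha F xbar) : (0:X) ∈ Cl2 F xbar v v := by
  intro V hV V1 hV1 V2 hV2
  obtain ⟨U, hU, lam, hlam, hF⟩ := exists_add_smul_add_smul_mem_of_mem_Ha hv
  refine ⟨U, hU, lam, hlam, lam, hlam, fun x' hx' μ ν hμ hμlam hν hνlam => ?_⟩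
  obtain ⟨hμv, hνv, hμνv⟩ := hF x' hx' μ ν hμ hμlam hν hνlam
  exact ⟨v, v, 0, by simpa using mem_of_mem_nhds hV1, hμv, by simpa using mem_of_mem_nhds hV2,
    hνv, by simpa using mem_of_mem_nhds hV, by simpa using hμνv⟩

theorem zero_mem_cl2 (F : Set X) (xbar : X) (hx : xbar ∈ F) (v : X)
    (hv : v ∈ Ha F xbar) : (0:X) ∈ Cl2 F xbar v v :=
  zero_mem_cl2_general F xbar v hv
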